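/- Let H be a weak bialgebra. For a right H-comodule algebra A (with ρ(ab)=ρ(a)ρ(b) and ρ(1_A) ∈ A⊗H_t), the map ū_A: H_s → A given by ū_A(x) = ε((1_A)_{[1]}x)(1_A)_{[0]} is a morphism of right H-comodules, where H_s carries the coaction Δ|_{H_s}: H_s → H_s⊗H. -/
import Mathlib


open TensorProduct LinearMap

namespace WeakBialgebraStmt

variable (k : Type*) [Field k] (H : Type*) [Ring H] [Algebra k H] [Coalgebra k H]

/-- `ε ⊗ ε` followed by multiplication of scalars, as a linear map `H ⊗ H → k`. -/
noncomputable def counit2 : H ⊗[k] H →ₗ[k] k :=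
  (LinearMap.mul' k k) ∘ₗ TensorProduct.map (Coalgebra.counit) (Coalgebra.counit)

/-- The weak bialgebra axioms for an algebra-and-coalgebra `H`:
comultiplication is multiplicative, the counit is weakly multiplicative
(`ε(abc) = ε(ab₁)ε(b₂c) = ε(ab₂)ε(b₁c)`), and the unit is weakly comultiplicative
(`Δ²(1) = (Δ(1)⊗1)(1⊗Δ(1)) = (1⊗Δ(1))(Δ(1)⊗1)`). -/
structure IsWeakBialgebra : Prop where
  comul_mul : ∀ a b : H,
    Coalgebra.comul (R := k) (a * b) = Coalgebra.comul (R := k) a * Coalgebra.comul (R := k) b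
  counit_weak : ∀ a b c : H, Coalgebra.counit (R := k) (a * b * c)
    = counit2 k H ((a ⊗ₜ[k] (1 : H)) * Coalgebra.comul (R := k) b * ((1 : H) ⊗ₜ[k] c))
  counit_weak' : ∀ a b c : H, Coalgebra.counit (R := k) (a * b * c)
    = counit2 k H (((1 : H) ⊗ₜ[k] a) * Coalgebra.comul (R := k) b * (c ⊗ₜ[k] (1 : H)))
  comul_one : rTensor H (Coalgebra.comul (R := k)) (Coalgebra.comul (R := k) (1 : H))
    = (Coalgebra.comul (R := k) (1 : H) ⊗ₜ[k] (1 : H)) *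
        ((TensorProduct.assoc k H H H).symm ((1 : H) ⊗ₜ[k] Coalgebra.comul (R := k) (1 : H)))
  comul_one' : rTensor H (Coalgebra.comul (R := k)) (Coalgebra.comul (R := k) (1 : H))
    = ((TensorProduct.assoc k H H H).symm ((1 : H) ⊗ₜ[k] Coalgebra.comul (R := k) (1 : H))) *
        (Coalgebra.comul (R := k) (1 : H) ⊗ₜ[k] (1 : H))

/-- The source counital map `ε_s(x) = 1₁ ε(x 1₂)`, obtained by applying `id ⊗ ε` to
`(1 ⊗ x) · Δ(1) = 1₁ ⊗ x 1₂`. -/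
noncomputable def εs : H →ₗ[k] H :=
  (TensorProduct.rid k H).toLinearMap ∘ₗ lTensor H (Coalgebra.counit) ∘ₗ
    mulRight k (Coalgebra.comul (R := k) (1 : H)) ∘ₗ TensorProduct.mk k H H 1

/-- The target counital map `ε_t(x) = ε(1₁ x) 1₂`, obtained by applying `ε ⊗ id` to
`Δ(1) · (x ⊗ 1) = 1₁ x ⊗ 1₂`. -/
noncomputable def εt : H →ₗ[k] H :=
  (TensorProduct.lid k H).toLinearMap ∘ₗ rTensor H (Coalgebra.counit) ∘ₗ
    mulLeft k (Coalgebra.comul (R := k) (1 : H)) ∘ₗ (TensorProduct.mk k H H).flip 1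

variable {k H} in
/-- A (coassociative, counital) right `H`-comodule structure on `M`. -/
structure IsComodule {M : Type*} [AddCommGroup M] [Module k M]
    (ρ : M →ₗ[k] M ⊗[k] H) : Prop where
  coassoc : ∀ m : M, rTensor H ρ (ρ m)
    = (TensorProduct.assoc k M H H).symm (lTensor M (Coalgebra.comul (R := k)) (ρ m))
  counital : ∀ m : M, (TensorProduct.rid k M) (lTensor M (Coalgebra.counit (R := k)) (ρ m)) = m

variable {k H} in
/-- The canonical (coassociative, but in general not counital) right `H`-coaction on
`M ⊗ N`, `m ⊗ n ↦ m₍₀₎ ⊗ n₍₀₎ ⊗ m₍₁₎n₍₁₎`. -/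
noncomputable def coactT {M N : Type*} [AddCommGroup M] [Module k M]
    [AddCommGroup N] [Module k N]
    (ρM : M →ₗ[k] M ⊗[k] H) (ρN : N →ₗ[k] N ⊗[k] H) :
    (M ⊗[k] N) →ₗ[k] (M ⊗[k] N) ⊗[k] H :=
  lTensor (M ⊗[k] N) (LinearMap.mul' k H) ∘ₗ
    (TensorProduct.tensorTensorTensorComm k M H N H).toLinearMap ∘ₗ
      TensorProduct.map ρM ρN

variable {k H} in
/-- The projection `E : M ⊗ N → M ⊗ N`, `m ⊗ n ↦ ε(m₍₁₎n₍₁₎) m₍₀₎ ⊗ n₍₀₎`, whose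
fixed-point space is the monoidal product `M ⊗̄ N` of `M` and `N` in `𝓜^H`. -/
noncomputable def Ebar {M N : Type*} [AddCommGroup M] [Module k M]
    [AddCommGroup N] [Module k N]
    (ρM : M →ₗ[k] M ⊗[k] H) (ρN : N →ₗ[k] N ⊗[k] H) :
    (M ⊗[k] N) →ₗ[k] (M ⊗[k] N) :=
  (TensorProduct.rid k (M ⊗[k] N)).toLinearMap ∘ₗ
    lTensor (M ⊗[k] N) (Coalgebra.counit (R := k)) ∘ₗ coactT ρM ρN

variable {k H} in
/-- A right `H`-comodule algebra structure: `A` is a `k`-algebra and a right `H`-comodule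
whose coaction is multiplicative, with `ρ(1_A) ∈ A ⊗ H_t`. -/
structure IsComoduleAlgebra {A : Type*} [Ring A] [Algebra k A]
    (ρ : A →ₗ[k] A ⊗[k] H) : Prop where
  toIsComodule : IsComodule ρ
  coact_mul : ∀ a b : A, ρ (a * b) = ρ a * ρ b
  coact_one : ρ (1 : A) ∈ LinearMap.range (lTensor A (εt k H))

variable {k H} in
/-- The unit morphism `ū : H_s → A`, `x ↦ ε(1_{A,[1]} x) 1_{A,[0]}`, defined on all of `H`
by applying `id ⊗ ε` to `ρ(1_A)·(1_A ⊗ x)`. -/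
noncomputable def uBar {A : Type*} [Ring A] [Algebra k A]
    (ρ : A →ₗ[k] A ⊗[k] H) : H →ₗ[k] A :=
  (TensorProduct.rid k A).toLinearMap ∘ₗ lTensor A (Coalgebra.counit (R := k)) ∘ₗ
    mulLeft k (ρ (1 : A)) ∘ₗ TensorProduct.mk k A H 1

set_option maxHeartbeats 1000000
set_option synthInstance.maxHeartbeats 200000

section Aux

/-- `lsMap y c = (id ⊗ ε)((1 ⊗ y) * c)`, so that `εs y = lsMap y (Δ 1)`. -/
noncomputable def lsMap (y : H) : H ⊗[k] H →ₗ[k] H :=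
  (TensorProduct.rid k H).toLinearMap ∘ₗ lTensor H (Coalgebra.counit (R := k)) ∘ₗ
    mulLeft k ((1 : H) ⊗ₜ[k] y)

/-- `rtMap g c = (ε ⊗ id)(c * (g ⊗ 1))`, so that `εt g = rtMap g (Δ 1)`. -/
noncomputable def rtMap (g : H) : H ⊗[k] H →ₗ[k] H :=
  (TensorProduct.lid k H).toLinearMap ∘ₗ rTensor H (Coalgebra.counit (R := k)) ∘ₗ
    mulRight k (g ⊗ₜ[k] (1 : H))

/-- `kyMap y ((p ⊗ q) ⊗ w) = (ε(q) ε(yw)) • p`. -/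
noncomputable def kyMap (y : H) : (H ⊗[k] H) ⊗[k] H →ₗ[k] H :=
  (TensorProduct.rid k H).toLinearMap ∘ₗ
    lTensor H (counit2 k H ∘ₗ mulLeft k ((1 : H) ⊗ₜ[k] y)) ∘ₗ
      (TensorProduct.assoc k H H H).toLinearMap

/-- `kgMap g ((p ⊗ q) ⊗ w) = (ε(pg) ε(q)) • w`. -/
noncomputable def kgMap (g : H) : (H ⊗[k] H) ⊗[k] H →ₗ[k] H :=
  (TensorProduct.lid k H).toLinearMap ∘ₗ
    rTensor H (counit2 k H ∘ₗ mulRight k (g ⊗ₜ[k] (1 : H)))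

/-- `uBar` with `ρ(1)` replaced by `(id ⊗ εt) a`. -/
noncomputable def uB {A : Type*} [Ring A] [Algebra k A] (a : A ⊗[k] H) : H →ₗ[k] A :=
  (TensorProduct.rid k A).toLinearMap ∘ₗ lTensor A (Coalgebra.counit (R := k)) ∘ₗ
    mulLeft k ((lTensor A (εt k H)) a) ∘ₗ TensorProduct.mk k A H 1

variable {k H}


lemma counit2_tmul (a b : H) :
    counit2 k H (a ⊗ₜ[k] b) = Coalgebra.counit (R := k) a * Coalgebra.counit (R := k) b := by
  simp [counit2]

lemma εs_eq (y : H) : εs k H y = lsMap k H y (Coalgebra.comul (R := k) (1 : H)) := by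
  simp [εs, lsMap]

lemma εt_eq (g : H) : εt k H g = rtMap k H g (Coalgebra.comul (R := k) (1 : H)) := by
  simp [εt, rtMap]

/-- `Δ(εs y) = (1 ⊗ εs y) * Δ(1)`, i.e. `Δ` restricted to `H_s` is `x ↦ 1₁ ⊗ x 1₂`. -/
lemma comul_εs (hwb : IsWeakBialgebra k H) (y : H) :
    Coalgebra.comul (R := k) (εs k H y)
      = ((1 : H) ⊗ₜ[k] εs k H y) * Coalgebra.comul (R := k) (1 : H) := by
  have h1 : ∀ c : H ⊗[k] H,
      Coalgebra.comul (R := k) (lsMap k H y c)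
        = (TensorProduct.rid k (H ⊗[k] H))
            ((lTensor (H ⊗[k] H) (Coalgebra.counit (R := k) ∘ₗ mulLeft k y))
              (rTensor H (Coalgebra.comul (R := k)) c)) := by
    intro c
    induction c using TensorProduct.induction_on with
    | zero => simp
    | tmul u v => simp [lsMap, Algebra.TensorProduct.tmul_mul_tmul]
    | add c c' hc hc' => simp [mul_add, map_add, hc, hc']
  have h2 : ∀ c d : H ⊗[k] H,
      (TensorProduct.rid k (H ⊗[k] H))
          ((lTensor (H ⊗[k] H) (Coalgebra.counit (R := k) ∘ₗ mulLeft k y))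
            (((TensorProduct.assoc k H H H).symm ((1:H) ⊗ₜ[k] c)) * (d ⊗ₜ[k] (1:H))))
        = ((1:H) ⊗ₜ[k] lsMap k H y c) * d := by
    intro c d
    induction c using TensorProduct.induction_on with
    | zero => simp
    | tmul u v =>
      induction d using TensorProduct.induction_on with
      | zero => simp
      | tmul p q =>
        simp [lsMap, Algebra.TensorProduct.tmul_mul_tmul, TensorProduct.assoc_symm_tmul,
          smul_tmul', tmul_smul, smul_mul_assoc, mul_smul_comm]
      | add d d' hd hd' => simp only [tmul_add, add_tmul, mul_add, add_mul, map_add, hd, hd']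
    | add c c' hc hc' => simp only [tmul_add, add_tmul, mul_add, add_mul, map_add, hc, hc']
  rw [εs_eq, h1, hwb.comul_one', h2, ← εs_eq]

/-- `Δ(εt g) = Δ(1) * (εt g ⊗ 1)`. -/
lemma comul_εt (hwb : IsWeakBialgebra k H) (g : H) :
    Coalgebra.comul (R := k) (εt k H g)
      = Coalgebra.comul (R := k) (1 : H) * (εt k H g ⊗ₜ[k] (1 : H)) := by
  have h1 : ∀ c : H ⊗[k] H,
      Coalgebra.comul (R := k) (rtMap k H g c)
        = (TensorProduct.lid k (H ⊗[k] H))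
            ((rTensor (H ⊗[k] H) (Coalgebra.counit (R := k) ∘ₗ mulRight k g))
              (lTensor H (Coalgebra.comul (R := k)) c)) := by
    intro c
    induction c using TensorProduct.induction_on with
    | zero => simp
    | tmul u v => simp [rtMap, Algebra.TensorProduct.tmul_mul_tmul]
    | add c c' hc hc' => simp [mul_add, map_add, hc, hc']
  have hco : lTensor H (Coalgebra.comul (R := k)) (Coalgebra.comul (R := k) (1:H))
      = (TensorProduct.assoc k H H H)
          (rTensor H (Coalgebra.comul (R := k)) (Coalgebra.comul (R := k) (1:H))) :=
    (Coalgebra.coassoc_apply (1 : H)).symm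
  have h2 : ∀ c d : H ⊗[k] H,
      (TensorProduct.lid k (H ⊗[k] H))
          ((rTensor (H ⊗[k] H) (Coalgebra.counit (R := k) ∘ₗ mulRight k g))
            ((TensorProduct.assoc k H H H)
              (((TensorProduct.assoc k H H H).symm ((1:H) ⊗ₜ[k] c)) * (d ⊗ₜ[k] (1:H)))))
        = c * (rtMap k H g d ⊗ₜ[k] (1:H)) := by
    intro c d
    induction c using TensorProduct.induction_on with
    | zero => simp
    | tmul u v =>
      induction d using TensorProduct.induction_on with
      | zero => simp
      | tmul p q =>
        simp [rtMap, Algebra.TensorProduct.tmul_mul_tmul, TensorProduct.assoc_symm_tmul,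
          TensorProduct.assoc_tmul, smul_tmul', tmul_smul, smul_mul_assoc, mul_smul_comm]
      | add d d' hd hd' => simp only [tmul_add, add_tmul, mul_add, add_mul, map_add, hd, hd']
    | add c c' hc hc' => simp only [tmul_add, add_tmul, mul_add, add_mul, map_add, hc, hc']
  rw [εt_eq, h1, hco, hwb.comul_one', h2, ← εt_eq]

/-- `(id ⊗ ε)(Δ(1) * (1 ⊗ εs y)) = εs y`. -/
lemma eps_s_absorb (hwb : IsWeakBialgebra k H) (y : H) :
    (TensorProduct.rid k H) ((lTensor H (Coalgebra.counit (R := k)))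
        (Coalgebra.comul (R := k) (1:H) * ((1:H) ⊗ₜ[k] εs k H y)))
      = εs k H y := by
  have hAux : ∀ (e : H ⊗[k] H) (w : H), kyMap k H y (e ⊗ₜ[k] w)
      = Coalgebra.counit (R := k) (y * w) •
          (TensorProduct.rid k H) ((lTensor H (Coalgebra.counit (R := k))) e) := by
    intro e w
    induction e using TensorProduct.induction_on with
    | zero => simp
    | tmul p q =>
      simp [kyMap, counit2, Algebra.TensorProduct.tmul_mul_tmul, TensorProduct.assoc_tmul,
        smul_smul, mul_comm]
    | add e e' he he' => simp only [add_tmul, map_add, he, he', smul_add]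
  have h1 : ∀ c : H ⊗[k] H,
      kyMap k H y (rTensor H (Coalgebra.comul (R := k)) c) = lsMap k H y c := by
    intro c
    induction c using TensorProduct.induction_on with
    | zero => simp
    | tmul u w =>
      rw [rTensor_tmul, hAux, Coalgebra.lTensor_counit_comul]
      simp [lsMap, Algebra.TensorProduct.tmul_mul_tmul]
    | add c c' hc hc' => simp only [map_add, hc, hc']
  have h2 : ∀ c d : H ⊗[k] H,
      kyMap k H y ((c ⊗ₜ[k] (1:H)) * ((TensorProduct.assoc k H H H).symm ((1:H) ⊗ₜ[k] d)))
        = (TensorProduct.rid k H) ((lTensor H (Coalgebra.counit (R := k)))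
            (c * ((1:H) ⊗ₜ[k] lsMap k H y d))) := by
    intro c d
    induction c using TensorProduct.induction_on with
    | zero => simp
    | tmul u v =>
      induction d using TensorProduct.induction_on with
      | zero => simp
      | tmul p q =>
        simp [kyMap, lsMap, counit2, Algebra.TensorProduct.tmul_mul_tmul,
          TensorProduct.assoc_symm_tmul, TensorProduct.assoc_tmul,
          smul_tmul', tmul_smul, smul_smul, mul_comm]
      | add d d' hd hd' => simp only [tmul_add, add_tmul, mul_add, add_mul, map_add, hd, hd']
    | add c c' hc hc' => simp only [tmul_add, add_tmul, mul_add, add_mul, map_add, hc, hc']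
  rw [εs_eq, ← h2, ← hwb.comul_one, h1]

/-- `(ε ⊗ id)((εt g ⊗ 1) * Δ(1)) = εt g`. -/
lemma eps_t_absorb (hwb : IsWeakBialgebra k H) (g : H) :
    (TensorProduct.lid k H) ((rTensor H (Coalgebra.counit (R := k)))
        ((εt k H g ⊗ₜ[k] (1:H)) * Coalgebra.comul (R := k) (1:H)))
      = εt k H g := by
  have h1 : ∀ c : H ⊗[k] H,
      kgMap k H g (rTensor H (Coalgebra.comul (R := k)) c) = rtMap k H g c := by
    intro c
    induction c using TensorProduct.induction_on with
    | zero => simp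
    | tmul u w =>
      have hcw : Coalgebra.counit (R := k) (u * g)
          = counit2 k H (Coalgebra.comul (R := k) u * (g ⊗ₜ[k] (1:H))) := by
        have := hwb.counit_weak' 1 u g
        rwa [one_mul, ← Algebra.TensorProduct.one_def, one_mul] at this
      rw [rTensor_tmul, kgMap, rtMap]
      simp only [coe_comp, Function.comp_apply, LinearEquiv.coe_coe, rTensor_tmul,
        mulRight_apply, lid_tmul, comp_apply]
      rw [← hcw]
      simp [Algebra.TensorProduct.tmul_mul_tmul]
    | add c c' hc hc' => simp only [map_add, hc, hc']
  have h2 : ∀ c d : H ⊗[k] H,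
      kgMap k H g ((c ⊗ₜ[k] (1:H)) * ((TensorProduct.assoc k H H H).symm ((1:H) ⊗ₜ[k] d)))
        = (TensorProduct.lid k H) ((rTensor H (Coalgebra.counit (R := k)))
            ((rtMap k H g c ⊗ₜ[k] (1:H)) * d)) := by
    intro c d
    induction c using TensorProduct.induction_on with
    | zero => simp
    | tmul u v =>
      induction d using TensorProduct.induction_on with
      | zero => simp
      | tmul p q =>
        simp [kgMap, rtMap, counit2, Algebra.TensorProduct.tmul_mul_tmul,
          TensorProduct.assoc_symm_tmul, smul_tmul', tmul_smul, smul_smul,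
          smul_mul_assoc, mul_comm]
      | add d d' hd hd' => simp only [tmul_add, add_tmul, mul_add, add_mul, map_add, hd, hd']
    | add c c' hc hc' => simp only [tmul_add, add_tmul, mul_add, add_mul, map_add, hc, hc']
  rw [εt_eq, ← h2, ← hwb.comul_one, h1]

lemma mul_shift_r : ∀ (c : H ⊗[k] H) (h x : H),
    (TensorProduct.rid k H) ((lTensor H (Coalgebra.counit (R := k))) (c * (h ⊗ₜ[k] x)))
      = (TensorProduct.rid k H) ((lTensor H (Coalgebra.counit (R := k)))
          (c * ((1:H) ⊗ₜ[k] x))) * h := by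
  intro c h x
  induction c using TensorProduct.induction_on with
  | zero => simp
  | tmul u v => simp [Algebra.TensorProduct.tmul_mul_tmul, smul_mul_assoc]
  | add c c' hc hc' => simp only [add_mul, map_add, hc, hc']

lemma mul_shift_l : ∀ (c : H ⊗[k] H) (h x : H),
    (TensorProduct.lid k H) ((rTensor H (Coalgebra.counit (R := k))) ((h ⊗ₜ[k] x) * c))
      = x * (TensorProduct.lid k H) ((rTensor H (Coalgebra.counit (R := k)))
          ((h ⊗ₜ[k] (1:H)) * c)) := by
  intro c h x
  induction c using TensorProduct.induction_on with
  | zero => simp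
  | tmul u v => simp [Algebra.TensorProduct.tmul_mul_tmul, mul_smul_comm]
  | add c c' hc hc' => simp only [mul_add, map_add, hc, hc']

/-- Key identity: `(εt g)₁ ε((εt g)₂ · εs y) = ε(εt g · 1₁) (εs y) 1₂`. -/
lemma key_H (hwb : IsWeakBialgebra k H) (g y : H) :
    (TensorProduct.rid k H) ((lTensor H (Coalgebra.counit (R := k)))
        (Coalgebra.comul (R := k) (εt k H g) * ((1:H) ⊗ₜ[k] εs k H y)))
      = (TensorProduct.lid k H) ((rTensor H (Coalgebra.counit (R := k)))
          ((εt k H g ⊗ₜ[k] (1:H)) * Coalgebra.comul (R := k) (εs k H y))) := by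
  rw [comul_εt hwb, comul_εs hwb]
  have e1 : Coalgebra.comul (R := k) (1:H) * (εt k H g ⊗ₜ[k] (1:H)) * ((1:H) ⊗ₜ[k] εs k H y)
      = Coalgebra.comul (R := k) (1:H) * (εt k H g ⊗ₜ[k] εs k H y) := by
    rw [mul_assoc, Algebra.TensorProduct.tmul_mul_tmul, mul_one, one_mul]
  have e2 : (εt k H g ⊗ₜ[k] (1:H)) * (((1:H) ⊗ₜ[k] εs k H y) * Coalgebra.comul (R := k) (1:H))
      = (εt k H g ⊗ₜ[k] εs k H y) * Coalgebra.comul (R := k) (1:H) := by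
    rw [← mul_assoc, Algebra.TensorProduct.tmul_mul_tmul, mul_one, one_mul]
  rw [e1, e2, mul_shift_r, mul_shift_l, eps_s_absorb hwb, eps_t_absorb hwb]

lemma uB_zero {A : Type*} [Ring A] [Algebra k A] : uB k H (0 : A ⊗[k] H) = 0 := by
  ext h; simp [uB]

lemma uB_add {A : Type*} [Ring A] [Algebra k A] (a a' : A ⊗[k] H) : uB k H (a + a') = uB k H a + uB k H a' := by
  ext h; simp [uB, add_mul]

lemma uB_tmul {A : Type*} [Ring A] [Algebra k A] (b : A) (g h : H) :
    uB k H (b ⊗ₜ[k] g) h = Coalgebra.counit (R := k) (εt k H g * h) • b := by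
  simp [uB, Algebra.TensorProduct.tmul_mul_tmul]

lemma key_A {A : Type*} [Ring A] [Algebra k A] (hwb : IsWeakBialgebra k H) (y : H) (a : A ⊗[k] H) :
    (TensorProduct.rid k (A ⊗[k] H))
        ((lTensor (A ⊗[k] H) (Coalgebra.counit (R := k) ∘ₗ mulRight k (εs k H y)))
          ((TensorProduct.assoc k A H H).symm
            ((lTensor A (Coalgebra.comul (R := k) ∘ₗ εt k H)) a)))
      = rTensor H (uB k H a) (((1:H) ⊗ₜ[k] εs k H y) * Coalgebra.comul (R := k) (1:H)) := by
  have hP : ∀ (b : A) (w : H ⊗[k] H),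
      (TensorProduct.rid k (A ⊗[k] H))
          ((lTensor (A ⊗[k] H) (Coalgebra.counit (R := k) ∘ₗ mulRight k (εs k H y)))
            ((TensorProduct.assoc k A H H).symm (b ⊗ₜ[k] w)))
        = b ⊗ₜ[k] ((TensorProduct.rid k H)
            ((lTensor H (Coalgebra.counit (R := k) ∘ₗ mulRight k (εs k H y))) w)) := by
    intro b w
    induction w using TensorProduct.induction_on with
    | zero => simp
    | tmul t1 t2 => simp [TensorProduct.assoc_symm_tmul, tmul_smul]
    | add w w' hw hw' => simp only [tmul_add, map_add, hw, hw']
  have hQ : ∀ (w : H ⊗[k] H) (x : H),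
      (TensorProduct.rid k H) ((lTensor H (Coalgebra.counit (R := k) ∘ₗ mulRight k x)) w)
        = (TensorProduct.rid k H) ((lTensor H (Coalgebra.counit (R := k)))
            (w * ((1:H) ⊗ₜ[k] x))) := by
    intro w x
    induction w using TensorProduct.induction_on with
    | zero => simp
    | tmul t1 t2 => simp [Algebra.TensorProduct.tmul_mul_tmul]
    | add w w' hw hw' => simp only [add_mul, map_add, hw, hw']
  have hR : ∀ (b : A) (g : H) (c : H ⊗[k] H),
      rTensor H (uB k H (b ⊗ₜ[k] g)) c
        = b ⊗ₜ[k] ((TensorProduct.lid k H)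
            ((rTensor H (Coalgebra.counit (R := k) ∘ₗ mulLeft k (εt k H g))) c)) := by
    intro b g c
    induction c using TensorProduct.induction_on with
    | zero => simp
    | tmul c1 c2 => simp [uB_tmul, smul_tmul', tmul_smul]
    | add c c' hc hc' => simp only [tmul_add, map_add, hc, hc']
  have hS : ∀ (h : H) (c : H ⊗[k] H),
      (TensorProduct.lid k H) ((rTensor H (Coalgebra.counit (R := k) ∘ₗ mulLeft k h)) c)
        = (TensorProduct.lid k H) ((rTensor H (Coalgebra.counit (R := k)))
            ((h ⊗ₜ[k] (1:H)) * c)) := by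
    intro h c
    induction c using TensorProduct.induction_on with
    | zero => simp
    | tmul c1 c2 => simp [Algebra.TensorProduct.tmul_mul_tmul]
    | add c c' hc hc' => simp only [mul_add, map_add, hc, hc']
  induction a using TensorProduct.induction_on with
  | zero =>
    rw [uB_zero]
    simp
  | tmul b g =>
    rw [lTensor_tmul, hP, hQ]
    simp only [comp_apply]
    rw [key_H hwb g y, hR, hS, ← comul_εs hwb]
  | add a a' ha ha' =>
    simp only [map_add, uB_add, rTensor_add, LinearMap.add_apply, ha, ha']

end Aux

/-- For a right `H`-comodule algebra `A` over a weak bialgebra `H`, the map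
`ū : H_s → A`, `x ↦ ε(1_{A,[1]} x) 1_{A,[0]}`, is a morphism of right `H`-comodules, where
`H_s` carries the coaction `Δ|_{H_s}`. -/
theorem uBar_comodule_map {A : Type*} [Ring A] [Algebra k A]
    (ρ : A →ₗ[k] A ⊗[k] H) (hwb : IsWeakBialgebra k H) (hA : IsComoduleAlgebra ρ) :
    ∀ x : H, x ∈ LinearMap.range (εs k H) →
      ρ (uBar ρ x) = rTensor H (uBar ρ) (Coalgebra.comul (R := k) x) := by
  rintro x ⟨y, rfl⟩
  obtain ⟨a, ha⟩ := hA.coact_one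
  have hu : ∀ z : H, uBar ρ z
      = (TensorProduct.rid k A) ((lTensor A (Coalgebra.counit (R := k)))
          (ρ (1:A) * ((1:A) ⊗ₜ[k] z))) := by
    intro z; simp [uBar]
  have step1 : ∀ (m : A ⊗[k] H) (x : H),
      ρ ((TensorProduct.rid k A) ((lTensor A (Coalgebra.counit (R := k)))
          (m * ((1:A) ⊗ₜ[k] x))))
        = (TensorProduct.rid k (A ⊗[k] H))
            ((lTensor (A ⊗[k] H) (Coalgebra.counit (R := k) ∘ₗ mulRight k x))
              (rTensor H ρ m)) := by
    intro m x
    induction m using TensorProduct.induction_on with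
    | zero => simp
    | tmul b h => simp [Algebra.TensorProduct.tmul_mul_tmul]
    | add m m' hm hm' => simp only [add_mul, map_add, hm, hm']
  have huB : uBar ρ = uB k H a := by
    rw [uBar, uB, ha]
  rw [hu, step1, hA.toIsComodule.coassoc 1, ← ha, ← lTensor_comp_apply,
    huB, comul_εs hwb, key_A hwb]


end WeakBialgebraStmt
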